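/- arXiv:1305.5266 — 5 statements merged into one kernel-verified Lean document; each statement's English description precedes it below -/
import Mathlib

section
/- If a correct decomposition ℬ of a starting box B₀ with respect to points z¹,…,z^{s-1} is updated by applying a full m-split with respect to a new point z^s to every box of ℬ containing z^s, then the resulting collection is a correct decomposition with respect to z¹,…,z^s. -/
/-!
A full split of a box `B` at a point `z* ∈ B` removes from `B` exactly the points `z ≥ z*`, and a
box not containing `z*` has no such points at all. Hence the update shrinks the union of the
collection by exactly `{z ≥ z*}`, so its complement in `B₀` grows by exactly `S₂(z*)`.
-/

open Set

section FullSplit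

variable {ι α : Type*} [LinearOrder α]

def box (l b : ι → α) : Set (ι → α) := {z | ∀ i, l i ≤ z i ∧ z i < b i}

/-- `S₂(p)` of the paper is `box l u ∩ Ici p`. -/
def IsCorrect (l u : ι → α) (ℬ P : Finset (ι → α)) : Prop :=
  box l u \ (⋃ b ∈ ℬ, box l b) = ⋃ p ∈ P, box l u ∩ Ici p

lemma iUnion_box_inter_lt (l b zs : ι → α) :
    ⋃ i, box l b ∩ {z | z i < zs i} = box l b \ Ici zs := by
  ext z
  simp only [mem_iUnion, mem_inter_iff, mem_ofPred_eq, mem_sdiff, mem_Ici, Pi.le_def, not_forall,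
    not_le, exists_and_left]

lemma box_sdiff_Ici_of_not_lt {l b zs : ι → α} (h : ¬ ∀ i, zs i < b i) :
    box l b \ Ici zs = box l b :=
  sdiff_eq_left.2 <| disjoint_left.2 fun _ hz hzs =>
    h fun i => (hzs i).trans_lt (hz i).2

lemma iUnion_fullSplit_eq_sdiff_Ici (l zs : ι → α) (ℬ : Finset (ι → α))
    [DecidablePred fun b : ι → α => ∀ i, zs i < b i] :
    (⋃ b ∈ ℬ.filter (fun b : ι → α => ¬ ∀ i, zs i < b i), box l b) ∪
        (⋃ b ∈ ℬ.filter (fun b : ι → α => ∀ i, zs i < b i), ⋃ i, box l b ∩ {z | z i < zs i}) =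
      (⋃ b ∈ ℬ, box l b) \ Ici zs := by
  have hkeep : (⋃ b ∈ ℬ.filter (fun b : ι → α => ¬ ∀ i, zs i < b i), box l b) =
      ⋃ b ∈ ℬ.filter (fun b : ι → α => ¬ ∀ i, zs i < b i), (box l b \ Ici zs) := by
    refine iUnion_congr fun b => iUnion_congr fun hb => ?_
    exact (box_sdiff_Ici_of_not_lt (Finset.mem_filter.1 hb).2).symm
  classical
  simp only [iUnion_box_inter_lt]
  rw [hkeep, union_comm, ← Finset.set_biUnion_union, Finset.filter_union_filter_not_eq]
  simp only [iUnion_sdiff]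

theorem isCorrect_insert_of_fullSplit {l u : ι → α} {ℬ P : Finset (ι → α)} (zs : ι → α)
    [DecidableEq (ι → α)] [DecidablePred fun b : ι → α => ∀ i, zs i < b i]
    (hcorrect : IsCorrect l u ℬ P) :
    box l u \ ((⋃ b ∈ ℬ.filter (fun b : ι → α => ¬ ∀ i, zs i < b i), box l b) ∪
        (⋃ b ∈ ℬ.filter (fun b : ι → α => ∀ i, zs i < b i), ⋃ i, box l b ∩ {z | z i < zs i})) =
      ⋃ p ∈ insert zs P, box l u ∩ Ici p := by
  rw [iUnion_fullSplit_eq_sdiff_Ici, sdiff_sdiff_right, hcorrect, Finset.set_biUnion_insert,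
    union_comm]

end FullSplit

theorem stmt_3_general {m : ℕ} [DecidableEq (Fin m → ℝ)] (l u zs : Fin m → ℝ)
    (ℬ P : Finset (Fin m → ℝ))
    (hcorrect :
      {z : Fin m → ℝ | ∀ i, l i ≤ z i ∧ z i < u i} \
          (⋃ b ∈ ℬ, {z : Fin m → ℝ | ∀ i, l i ≤ z i ∧ z i < b i}) =
        ⋃ p ∈ P, {z : Fin m → ℝ | (∀ i, l i ≤ z i ∧ z i < u i) ∧ ∀ i, p i ≤ z i}) :
    {z : Fin m → ℝ | ∀ i, l i ≤ z i ∧ z i < u i} \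
        ((⋃ b ∈ ℬ.filter (fun b => ¬ ∀ i, zs i < b i),
            {z : Fin m → ℝ | ∀ i, l i ≤ z i ∧ z i < b i}) ∪
          (⋃ b ∈ ℬ.filter (fun b => ∀ i, zs i < b i), ⋃ i : Fin m,
            {z : Fin m → ℝ | (∀ t, l t ≤ z t ∧ z t < b t) ∧ z i < zs i})) =
      ⋃ p ∈ insert zs P,
        {z : Fin m → ℝ | (∀ i, l i ≤ z i ∧ z i < u i) ∧ ∀ i, p i ≤ z i} :=
  isCorrect_insert_of_fullSplit zs hcorrect

/-- Correctness of the full `m`-split: if a correct decomposition (given by the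
finite set `ℬ` of upper bounds of boxes with common lower bound `l`, inside the
starting box `B₀ = {z : l ≤ z < u}`) with respect to the points of `P` is updated
by applying a full `m`-split with respect to a new point `zs ∈ B₀` to every box of
`ℬ` containing `zs`, then the resulting collection is a correct decomposition with
respect to `P ∪ {zs}`. -/
theorem stmt_3 {m : ℕ} [DecidableEq (Fin m → ℝ)] (l u zs : Fin m → ℝ)
    (ℬ P : Finset (Fin m → ℝ))
    (hcorrect :
      {z : Fin m → ℝ | ∀ i, l i ≤ z i ∧ z i < u i} \
          (⋃ b ∈ ℬ, {z : Fin m → ℝ | ∀ i, l i ≤ z i ∧ z i < b i}) =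
        ⋃ p ∈ P, {z : Fin m → ℝ | (∀ i, l i ≤ z i ∧ z i < u i) ∧ ∀ i, p i ≤ z i})
    (hzs : ∀ i, l i ≤ zs i ∧ zs i < u i) :
    {z : Fin m → ℝ | ∀ i, l i ≤ z i ∧ z i < u i} \
        ((⋃ b ∈ ℬ.filter (fun b => ¬ ∀ i, zs i < b i),
            {z : Fin m → ℝ | ∀ i, l i ≤ z i ∧ z i < b i}) ∪
          (⋃ b ∈ ℬ.filter (fun b => ∀ i, zs i < b i), ⋃ i : Fin m,
            {z : Fin m → ℝ | (∀ t, l t ≤ z t ∧ z t < b t) ∧ z i < zs i})) =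
      ⋃ p ∈ insert zs P,
        {z : Fin m → ℝ | (∀ i, l i ≤ z i ∧ z i < u i) ∧ ∀ i, p i ≤ z i} :=
  stmt_3_general l u zs ℬ P hcorrect
end

section
/- Let B̂ be a box not containing z^s in a non-redundant decomposition where all previously generated points differ pairwise from z^s in every component. Then B̂ does not dominate any box Bᵢ obtained by splitting a box B containing z^s with respect to component i, and no such Bᵢ dominates B̂. -/
/-!
The split box `Bᵢ` lies between `z^s` and `u(B)`. If `B̂` dominated `Bᵢ` it would dominate `B`,
contradicting non-redundancy (`B̂ ≠ B`, since `z^s` lies in `B` but not in `B̂`). If `Bᵢ`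
dominated `B̂`, then `z^s ≤ u(B̂)`, which together with `u(B̂)ⱼ ≤ z^sⱼ` forces `z^sⱼ = u(B̂)ⱼ`.
-/

open Function

theorem update_apply_mem_Icc {ι : Type*} {π : ι → Type*} [DecidableEq ι] [∀ i, Preorder (π i)]
    {x y : ∀ i, π i} (h : x ≤ y) (i : ι) : update y i (x i) ∈ Set.Icc x y :=
  ⟨le_update_iff.2 ⟨le_rfl, fun j _ ↦ h j⟩, update_le_self_iff.2 (h i)⟩

/-- Let `uB'` be (the upper bound of) a box of a non-redundant decomposition `ℬ`
not containing `zs` (some component of `zs` is `≥` the corresponding bound), where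
`zs` differs from every bound of `uB'` in every component.  Then `uB'` neither
dominates nor is dominated by any box `Bᵢ` obtained by splitting a box `uB ∈ ℬ`
containing `zs` with respect to a component `i`. -/
theorem stmt_6 {m : ℕ} (ℬ : Finset (Fin m → ℝ))
    (hnonred : ∀ a ∈ ℬ, ∀ b ∈ ℬ, a ≠ b → ¬ a ≤ b)
    (zs uB uB' : Fin m → ℝ) (hB : uB ∈ ℬ) (hB' : uB' ∈ ℬ)
    (hout : ∃ j, uB' j ≤ zs j) (hneq : ∀ j, zs j ≠ uB' j)
    (hin : ∀ j, zs j < uB j) (i : Fin m) :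
    ¬ uB' ≤ Function.update uB i (zs i) ∧
    ¬ Function.update uB i (zs i) ≤ uB' := by
  obtain ⟨j, hj⟩ := hout
  obtain ⟨hzs_le_split, hsplit_le_uB⟩ := update_apply_mem_Icc (fun k ↦ (hin k).le) i
  have hne : uB' ≠ uB := by
    rintro rfl
    exact (hin j).not_ge hj
  refine ⟨fun h ↦ hnonred uB' hB' uB hB hne (h.trans hsplit_le_uB), fun h ↦ ?_⟩
  exact hneq j (le_antisymm ((hzs_le_split.trans h) j) hj)
end

section
/- If exactly one box B of a non-redundant decomposition is split with respect to all m components by a new point z^s with z^s < u(B) (componentwise), and z^sⱼ ≠ u(B')ⱼ for every other box B' and every component j, then the m resulting boxes Bᵢ together with the unchanged boxes form a non-redundant collection. -/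
/-!
Every box `Bᵢ` of the split lies below `u(B)` and above `z^s`. Below `u(B)` means an old box
cannot be dominated by `Bᵢ` without being dominated by `B`; above `z^s` means `Bᵢ` cannot be
dominated by an old box `B'`, since `u(B')ⱼ < z^sⱼ` for some `j`. Two split boxes `Bᵢ ≠ Bⱼ`
are incomparable because in component `j` the first keeps `u(B)ⱼ > z^sⱼ = u(Bⱼ)ⱼ`.
-/

open Function

section SplitBox

variable {ι α : Type*} [DecidableEq ι] [Preorder α] {u z : ι → α}

theorem update_apply_le_self (h : z ≤ u) (i : ι) : update u i (z i) ≤ u :=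
  update_le_self_iff.2 (h i)

theorem le_update_apply (h : z ≤ u) (i : ι) : z ≤ update u i (z i) :=
  le_update_iff.2 ⟨le_rfl, fun j _ => h j⟩

theorem isAntichain_range_update (h : ∀ i, z i < u i) :
    IsAntichain (· ≤ ·) (Set.range fun i => update u i (z i)) := by
  rintro _ ⟨i, rfl⟩ _ ⟨j, rfl⟩ hne hle
  have hij : i ≠ j := by rintro rfl; exact hne rfl
  have hle_j : update u i (z i) j ≤ update u j (z j) j := hle j
  rw [update_of_ne hij.symm, update_self] at hle_j
  exact (h j).not_ge hle_j

theorem IsAntichain.diff_singleton_union_range_update {s : Set (ι → α)}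
    (hs : IsAntichain (· ≤ ·) s) (hu : u ∈ s) (hz : ∀ i, z i < u i)
    (hbelow : ∀ b ∈ s, b ≠ u → ∃ j, b j < z j) :
    IsAntichain (· ≤ ·) (s \ {u} ∪ Set.range fun i => update u i (z i)) := by
  have hzu : z ≤ u := fun i => (hz i).le
  refine isAntichain_union.2 ⟨hs.diff, isAntichain_range_update hz, ?_⟩
  rintro b ⟨hb, hbu⟩ _ ⟨i, rfl⟩ -
  refine ⟨fun hle => hs hb hu hbu (hle.trans (update_apply_le_self hzu i)), fun hle => ?_⟩
  obtain ⟨j, hj⟩ := hbelow b hb hbu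
  exact hj.not_ge ((le_update_apply hzu i).trans hle j)

end SplitBox

/-- If exactly one box `uB` of a non-redundant decomposition `ℬ` is split with
respect to all `m` components by a new point `zs < u(B)`, where `zs` differs in
every component from the bounds of every other box, then the `m` resulting boxes
together with the unchanged boxes form a non-redundant collection. -/
theorem stmt_7 {m : ℕ} [DecidableEq (Fin m → ℝ)] (ℬ : Finset (Fin m → ℝ))
    (hnonred : ∀ a ∈ ℬ, ∀ b ∈ ℬ, a ≠ b → ¬ a ≤ b)
    (zs uB : Fin m → ℝ) (hB : uB ∈ ℬ) (hin : ∀ t, zs t < uB t)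
    (hunique : ∀ b ∈ ℬ, b ≠ uB → ∃ j, b j ≤ zs j)
    (hneq : ∀ b ∈ ℬ, b ≠ uB → ∀ j, b j ≠ zs j) :
    ∀ a ∈ (ℬ.erase uB) ∪
        Finset.image (fun i => Function.update uB i (zs i)) Finset.univ,
      ∀ b ∈ (ℬ.erase uB) ∪
        Finset.image (fun i => Function.update uB i (zs i)) Finset.univ,
      a ≠ b → ¬ a ≤ b := by
  have hbelow : ∀ b ∈ ℬ, b ≠ uB → ∃ j, b j < zs j := fun b hb hbu =>
    (hunique b hb hbu).imp fun j hj => hj.lt_of_ne (hneq b hb hbu j)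
  have hsplit := IsAntichain.diff_singleton_union_range_update
    (s := (ℬ : Set (Fin m → ℝ))) hnonred hB hin hbelow
  rw [← Finset.coe_erase, ← Set.image_univ, ← Finset.coe_univ, ← Finset.coe_image,
    ← Finset.coe_union] at hsplit
  exact hsplit
end

section
/- In the graph on the boxes containing z^s where each d-box (box split with respect to exactly d ∈ {0,1,2} of the 3 components) has exactly 3 − d neighbors also containing z^s, if three distinct 2-boxes are present then at least one 0-box must be present. -/
/-! Count the boxes of odd degree. A box of degree `3 - |J|` has odd degree exactly when it is a
`0`-box or a `2`-box, and by the handshake lemma there is an even number of such boxes. The `2`-boxes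
have pairwise distinct two-element split sets in `Fin 3`, so there are exactly three of them;
hence some `0`-box must exist to restore the parity. -/

open Finset

theorem SimpleGraph.even_sum_card_filter_adj {α : Type*} (G : SimpleGraph α) [DecidableRel G.Adj]
    (S : Finset α) : Even (∑ b ∈ S, #{b' ∈ S | G.Adj b b'}) := by
  classical
  let H : SimpleGraph S := G.comap (Function.Embedding.subtype _)
  have hdeg (v : S) : H.degree v = #{b' ∈ S | G.Adj v b'} := by
    rw [← card_neighborFinset_eq_degree, ← card_map (Function.Embedding.subtype _)]
    congr 1
    ext x
    simp only [mem_map, mem_filter, Function.Embedding.coe_subtype, mem_neighborFinset]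
    constructor
    · rintro ⟨y, hy, rfl⟩
      exact ⟨y.2, hy⟩
    · rintro ⟨hx, hadj⟩
      exact ⟨⟨x, hx⟩, hadj, rfl⟩
  rw [← sum_coe_sort, ← sum_congr rfl fun v _ => hdeg v, H.sum_degrees_eq_twice_card_edges]
  exact even_two_mul _

theorem Finset.card_filter_card_eq_le_choose {α : Type*} {n k : ℕ} (S : Finset α)
    (J : α → Finset (Fin n)) (hJ : Set.InjOn J {b ∈ S | (J b).card = k}) :
    #{b ∈ S | (J b).card = k} ≤ n.choose k := by
  calc #{b ∈ S | (J b).card = k} ≤ #(powersetCard k (univ : Finset (Fin n))) :=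
        card_le_card_of_injOn J (fun b hb => by simp_all) (by simpa using hJ)
    _ = n.choose k := by simp

/-- In the graph on the boxes containing `zs` in which each `d`-box (split with
respect to exactly `d` of the 3 components) has exactly `3 − d` neighbors also
containing `zs`, if three distinct `2`-boxes (with pairwise distinct split sets)
are present and no box is split with respect to more than two components, then at
least one `0`-box must be present. -/
theorem stmt_12 {α : Type*} [DecidableEq α] (G : SimpleGraph α) [DecidableRel G.Adj]
    (S : Finset α) (J : α → Finset (Fin 3))
    (hdeg : ∀ b ∈ S, (S.filter (G.Adj b)).card = 3 - (J b).card)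
    (hle : ∀ b ∈ S, (J b).card ≤ 2)
    (hdiff : ∀ b ∈ S, ∀ b' ∈ S, b ≠ b' → (J b).card = 2 → (J b').card = 2 → J b ≠ J b')
    (a b c : α) (ha : a ∈ S) (hb : b ∈ S) (hc : c ∈ S)
    (hab : a ≠ b) (hac : a ≠ c) (hbc : b ≠ c)
    (h2a : (J a).card = 2) (h2b : (J b).card = 2) (h2c : (J c).card = 2) :
    ∃ d ∈ S, (J d).card = 0 := by
  by_contra! h0
  have htwo : #{x ∈ S | (J x).card = 2} = 3 := by
    refine le_antisymm (card_filter_card_eq_le_choose S J fun x hx y hy hJ => ?_) ?_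
    · exact by_contra fun hne => hdiff x hx.1 y hy.1 hne hx.2 hy.2 hJ
    · calc 3 = #{a, b, c} := by simp [hab, hac, hbc]
        _ ≤ _ := card_le_card fun x hx => by
          simp only [mem_insert, mem_singleton] at hx
          rcases hx with rfl | rfl | rfl <;> simp [*]
  have heven : Even (∑ x ∈ S, (3 - (J x).card)) := by
    rw [← sum_congr rfl hdeg]
    exact G.even_sum_card_filter_adj S
  -- Away from `0`-boxes, `3 - |J x|` is `2` minus the indicator of being a `2`-box.
  have hsum : ∑ x ∈ S, (3 - (J x).card) + #{x ∈ S | (J x).card = 2} = 2 * #S := by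
    rw [card_filter, ← sum_add_distrib, mul_comm, ← smul_eq_mul, ← sum_const]
    refine sum_congr rfl fun x hx => ?_
    have := hle x hx
    have := h0 x hx
    split_ifs <;> omega
  obtain ⟨k, hk⟩ := heven
  omega
end

section
/- Suppose B, B̃ are distinct boxes of a non-redundant decomposition, both containing z^s, both split with respect to the two components i and j (i ≠ j), producing boxes with upper bounds agreeing with the parent except equal to z^s in the split component. Then the constraint structure forces a contradiction unless at most three boxes in the decomposition are split with respect to exactly two components and their pairs of split components are pairwise distinct; in particular, no two boxes containing z^s can be split with respect to the same pair {i, j} of components. -/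
/-! A box split with respect to `t` has its neighbor's `t`-th bound at most `zs t`, and that
neighbor bounds every box lying strictly below it in component `t`; so no box containing `zs`
lies strictly below it there. Two boxes containing `zs` and split with respect to `i` and `j`
therefore agree in `i` and `j`, differ at most in the third component, and are comparable,
contradicting non-redundancy. -/

section Split

variable {ι α : Type*} [LinearOrder α] {ℬ : Set (ι → α)} {v : (ι → α) → ι → α}

theorem le_apply_of_split (hbelow : ∀ C ∈ ℬ, ∀ C' ∈ ℬ, ∀ t, C' t < C t → C' t ≤ v C t)
    {zs C C' : ι → α} (hC : C ∈ ℬ) (hC' : C' ∈ ℬ) {t : ι}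
    (hsplit : v C t ≤ zs t) (hz : zs t < C' t) : C t ≤ C' t :=
  not_lt.1 fun hlt => ((hbelow C hC C' hC' t hlt).trans hsplit).not_gt hz

theorem apply_eq_of_split (hbelow : ∀ C ∈ ℬ, ∀ C' ∈ ℬ, ∀ t, C' t < C t → C' t ≤ v C t)
    {zs C C' : ι → α} (hC : C ∈ ℬ) (hC' : C' ∈ ℬ) {t : ι}
    (hsC : v C t ≤ zs t) (hsC' : v C' t ≤ zs t) (hzC : zs t < C t) (hzC' : zs t < C' t) :
    C t = C' t :=
  (le_apply_of_split hbelow hC hC' hsC hzC').antisymm (le_apply_of_split hbelow hC' hC hsC' hzC)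

end Split

theorem Pi.le_or_le_of_forall_ne_eq {ι α : Type*} [LinearOrder α] {a b : ι → α} (k : ι)
    (hab : ∀ t ≠ k, a t = b t) : a ≤ b ∨ b ≤ a := by
  rcases le_total (a k) (b k) with hk | hk
  · left
    intro t
    by_cases ht : t = k
    · exact ht ▸ hk
    · exact (hab t ht).le
  · right
    intro t
    by_cases ht : t = k
    · exact ht ▸ hk
    · exact (hab t ht).ge

theorem Fin.exists_forall_ne_eq_or_eq {i j : Fin 3} (hij : i ≠ j) :
    ∃ k, ∀ t ≠ k, t = i ∨ t = j := by
  revert i j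
  decide

theorem stmt_18_general (ℬ : Finset (Fin 3 → ℝ))
    (v : (Fin 3 → ℝ) → Fin 3 → ℝ) (zs : Fin 3 → ℝ)
    (hnonred : ∀ a ∈ ℬ, ∀ b ∈ ℬ, a ≠ b → ¬ a ≤ b)
    (hnb : ∀ ub ∈ ℬ, ∀ t : Fin 3, (∃ w ∈ ℬ, w t < ub t) →
      ∃ w ∈ ℬ, w t = v ub t ∧ w t < ub t ∧
        (∃ j, j ≠ t ∧ ub j < w j ∧ ∀ k, k ≠ t → k ≠ j → w k = ub k) ∧
        (∀ w' ∈ ℬ, w' t < ub t → w' t ≤ w t))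
    (B B' : Fin 3 → ℝ) (hB : B ∈ ℬ) (hB' : B' ∈ ℬ) (hBB' : B ≠ B')
    (hzB : ∀ t, zs t < B t) (hzB' : ∀ t, zs t < B' t)
    (i j : Fin 3) (hij : i ≠ j)
    (hsi : v B i ≤ zs i) (hsj : v B j ≤ zs j) :
    ¬ (v B' i ≤ zs i ∧ v B' j ≤ zs j) := by
  rintro ⟨hsi', hsj'⟩
  have hbelow : ∀ C ∈ (ℬ : Set (Fin 3 → ℝ)), ∀ C' ∈ (ℬ : Set (Fin 3 → ℝ)), ∀ t,
      C' t < C t → C' t ≤ v C t := fun C hC C' hC' t hlt => by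
    obtain ⟨w, -, hwt, -, -, hmax⟩ := hnb C hC t ⟨C', hC', hlt⟩
    exact hwt ▸ hmax C' hC' hlt
  obtain ⟨k, hk⟩ := Fin.exists_forall_ne_eq_or_eq hij
  have hagree : ∀ t ≠ k, B t = B' t := by
    intro t ht
    rcases hk t ht with rfl | rfl
    · exact apply_eq_of_split hbelow hB hB' hsi hsi' (hzB t) (hzB' t)
    · exact apply_eq_of_split hbelow hB hB' hsj hsj' (hzB t) (hzB' t)
  rcases Pi.le_or_le_of_forall_ne_eq k hagree with hle | hle
  · exact hnonred B hB B' hB' hBB' hle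
  · exact hnonred B' hB' B hB hBB'.symm hle

/-- In the `v`-split setting for `m = 3` with the unique-neighbor structure:
no two distinct boxes of the non-redundant decomposition, both containing `zs`,
can be split with respect to the same pair `{i, j}` of components. -/
theorem stmt_18 (l : Fin 3 → ℝ) (ℬ : Finset (Fin 3 → ℝ))
    (v : (Fin 3 → ℝ) → Fin 3 → ℝ) (zs : Fin 3 → ℝ)
    (hnonred : ∀ a ∈ ℬ, ∀ b ∈ ℬ, a ≠ b → ¬ a ≤ b)
    (hnb : ∀ ub ∈ ℬ, ∀ t : Fin 3, (∃ w ∈ ℬ, w t < ub t) →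
      ∃ w ∈ ℬ, w t = v ub t ∧ w t < ub t ∧
        (∃ j, j ≠ t ∧ ub j < w j ∧ ∀ k, k ≠ t → k ≠ j → w k = ub k) ∧
        (∀ w' ∈ ℬ, w' t < ub t → w' t ≤ w t))
    (hvl : ∀ ub ∈ ℬ, ∀ t : Fin 3, (¬ ∃ w ∈ ℬ, w t < ub t) → v ub t = l t)
    (hpair : ∀ b ∈ ℬ, ∀ b' ∈ ℬ, b ≠ b' → ∃ t, b' t ≤ v b t)
    (B B' : Fin 3 → ℝ) (hB : B ∈ ℬ) (hB' : B' ∈ ℬ) (hBB' : B ≠ B')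
    (hzB : ∀ t, zs t < B t) (hzB' : ∀ t, zs t < B' t)
    (i j : Fin 3) (hij : i ≠ j)
    (hsi : v B i ≤ zs i) (hsj : v B j ≤ zs j) :
    ¬ (v B' i ≤ zs i ∧ v B' j ≤ zs j) :=
  stmt_18_general ℬ v zs hnonred hnb B B' hB hB' hBB' hzB hzB' i j hij hsi hsj
end
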